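/- arXiv:1608.08527 — 6 statements merged into one kernel-verified Lean document; each statement's English description precedes it below -/
import Mathlib

section
/- Under these hypotheses: (1) ∑_{s∈D} k_s ≤ β^{d−1} · (h − h_u), and (2) ∑_{s∈E} k_s ≥ k − β^{d−1} · h. (This is the 'Excess in Phase 1' lemma: when the elementary subtree is not overfull, the total server mass in deficient regions outside it is at most β_d(h − h_u), and the total server mass in excessive regions outside it is at least k − β_d·h.) -/
/-!
Every deficient region `s` at level `ℓ(s) ≤ d` holds at most `β^{ℓ(s)-1} h_s ≤ β^{d-1} h_s`
servers, and the regions of `D` share at most `h - h_u` of the capacity; this is (1).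
The elementary subtree holds at most `β h_u ≤ β^{d-1} h_u` servers since `d ≥ 2`, so the
excessive regions must carry the rest, `k - k_u - ∑_D k_s ≥ k - β^{d-1} h`; this is (2).
-/

open Finset

section FloorBounds

variable {α : Type*} [Field α] [LinearOrder α] [IsStrictOrderedRing α] [FloorRing α]

theorem natCast_le_pow_mul_of_le_floor {β y : α} {n i j : ℕ} (hβ : 1 ≤ β) (hij : i ≤ j)
    (hy : 0 ≤ y) (hn : (n : ℤ) ≤ ⌊β ^ i * y⌋) : (n : α) ≤ β ^ j * y :=
  calc (n : α) ≤ β ^ i * y := by exact_mod_cast Int.le_floor.mp hn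
    _ ≤ β ^ j * y := by gcongr

theorem sum_natCast_le_pow_mul_sum_of_le_floor {ι : Type*} (s : Finset ι) (f g e : ι → ℕ)
    {β : α} {m : ℕ} (hβ : 1 ≤ β) (he : ∀ i ∈ s, e i ≤ m)
    (hf : ∀ i ∈ s, (f i : ℤ) ≤ ⌊β ^ e i * (g i : α)⌋) :
    ∑ i ∈ s, (f i : α) ≤ β ^ m * ∑ i ∈ s, (g i : α) := by
  rw [mul_sum]
  exact sum_le_sum fun i hi =>
    natCast_le_pow_mul_of_le_floor hβ (he i hi) (Nat.cast_nonneg _) (hf i hi)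

end FloorBounds

theorem excess_phase1_general {S : Type*} [DecidableEq S]
    (d : ℕ) (hd : 2 ≤ d) (β : ℝ) (hβ1 : 1 < β)
    (D E : Finset S) (hDE : Disjoint D E)
    (ks hs : S → ℕ) (lev : S → ℕ)
    (hlev : ∀ s ∈ D, 1 ≤ lev s ∧ lev s ≤ d)
    (ku hu h : ℕ)
    (hh : hu + ∑ s ∈ D ∪ E, hs s ≤ h)
    (k : ℕ) (hk : k = ku + ∑ s ∈ D ∪ E, ks s)
    (hksD : ∀ s ∈ D, (ks s : ℤ) ≤ ⌊β ^ (lev s - 1) * (hs s : ℝ)⌋)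
    (hku : (ku : ℤ) ≤ ⌊β * (hu : ℝ)⌋) :
    (∑ s ∈ D, (ks s : ℝ)) ≤ β ^ (d - 1) * ((h : ℝ) - (hu : ℝ)) ∧
    (∑ s ∈ E, (ks s : ℝ)) ≥ (k : ℝ) - β ^ (d - 1) * (h : ℝ) := by
  have hD : ∑ s ∈ D, (ks s : ℝ) ≤ β ^ (d - 1) * ∑ s ∈ D, (hs s : ℝ) :=
    sum_natCast_le_pow_mul_sum_of_le_floor D ks hs (fun s => lev s - 1) hβ1.le
      (fun s hs => Nat.sub_le_sub_right (hlev s hs).2 1) hksD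
  have hcapD : ∑ s ∈ D, (hs s : ℝ) ≤ h - hu := by
    have hsub : ∑ s ∈ D, hs s ≤ ∑ s ∈ D ∪ E, hs s := sum_le_sum_of_subset subset_union_left
    rw [le_sub_iff_add_le', ← Nat.cast_sum, ← Nat.cast_add, Nat.cast_le]
    omega
  have hDcap : ∑ s ∈ D, (ks s : ℝ) ≤ β ^ (d - 1) * (h - hu) :=
    hD.trans (by gcongr)
  have hku' : (ku : ℝ) ≤ β ^ (d - 1) * hu :=
    natCast_le_pow_mul_of_le_floor (i := 1) hβ1.le (by omega) (Nat.cast_nonneg _)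
      (by rwa [pow_one])
  have hkR : (k : ℝ) = ku + ∑ s ∈ D, (ks s : ℝ) + ∑ s ∈ E, (ks s : ℝ) := by
    rw [hk, Nat.cast_add, Nat.cast_sum, sum_union hDE, add_assoc]
  refine ⟨hDcap, ?_⟩
  linarith

/-- "Excess in Phase 1": when the elementary subtree is not overfull
(`k_u ≤ ⌊β·h_u⌋ = ⌊β₂·h_u⌋`), the total server mass in deficient regions
outside it is at most `β_d·(h − h_u)`, and the total server mass in
excessive regions outside it is at least `k − β_d·h`, where `β_ℓ = β^{ℓ−1}`. -/
theorem excess_phase1 {S : Type*} [DecidableEq S]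
    (d : ℕ) (hd : 2 ≤ d) (β : ℝ) (hβ1 : 1 < β) (hβ2 : β ≤ 2)
    (D E : Finset S) (hDE : Disjoint D E)
    (ks hs : S → ℕ) (lev : S → ℕ)
    (hlev : ∀ s ∈ D, 1 ≤ lev s ∧ lev s ≤ d)
    (ku hu h : ℕ)
    (hh : hu + ∑ s ∈ D ∪ E, hs s ≤ h)
    (k : ℕ) (hk : k = ku + ∑ s ∈ D ∪ E, ks s)
    (hksD : ∀ s ∈ D, (ks s : ℤ) ≤ ⌊β ^ (lev s - 1) * (hs s : ℝ)⌋)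
    (hku : (ku : ℤ) ≤ ⌊β * (hu : ℝ)⌋) :
    (∑ s ∈ D, (ks s : ℝ)) ≤ β ^ (d - 1) * ((h : ℝ) - (hu : ℝ)) ∧
    (∑ s ∈ E, (ks s : ℝ)) ≥ (k : ℝ) - β ^ (d - 1) * (h : ℝ) :=
  excess_phase1_general d hd β hβ1 D E hDE ks hs lev hlev ku hu h hh k hk hksD hku
end

section
/- Under these hypotheses: (1) ∑_{s∈D} k_s ≤ k_q/β, and (2) ∑_{s∈E} k_s ≥ k_q/γ. (This is the 'Excess in Phase 2' lemma: when the region below the descending server is overfull relative to threshold β_ℓ, at most a 1/β fraction of its server mass lies in deficient edges and at least a 1/γ fraction lies in excessive edges.) -/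
/-!
Write `K_D`, `H_D` for the server mass and height of the deficient edges and `c = β^(ℓ-2)`.
Since `H_D ≤ h_q - 1` and `βc ≥ 1`, rounding down costs less than the slack `βc` left by the
missing unit of height: `β K_D ≤ βc (h_q - 1) ≤ βc h_q - 1 < ⌊βc h_q⌋ ≤ k_q`.
The excessive edges carry the rest, `k_q - K_D ≥ (1 - 1/β) k_q = k_q / γ`.
-/

open Finset

theorem mul_le_of_le_mul_of_floor_le {K H q c β : ℝ} {k : ℤ} (hβ : 0 ≤ β) (hβc : 1 ≤ β * c)
    (hK : K ≤ c * H) (hH : H + 1 ≤ q) (hk : ⌊β * c * q⌋ ≤ k) : β * K ≤ k := by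
  have hfloor : (⌊β * c * q⌋ : ℝ) ≤ k := by exact_mod_cast hk
  calc β * K ≤ β * c * H := by rw [mul_assoc]; exact mul_le_mul_of_nonneg_left hK hβ
    _ ≤ β * c * (q - 1) := mul_le_mul_of_nonneg_left (by linarith) (by linarith)
    _ ≤ β * c * q - 1 := by linarith
    _ ≤ k := by linarith [Int.sub_one_lt_floor (β * c * q)]

theorem div_div_sub_one_le_of_add_eq {a b k β : ℝ} (hβ : 1 < β) (hab : a + b = k)
    (ha : β * a ≤ k) : k / (β / (β - 1)) ≤ b := by
  have hβ0 : 0 < β := by linarith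
  rw [div_div_eq_mul_div, div_le_iff₀ hβ0]
  nlinarith

theorem excess_phase2_general {S : Type*} [DecidableEq S]
    (ℓ : ℕ) (hℓ1 : 2 ≤ ℓ)
    (β : ℝ) (hβ1 : 1 < β)
    (γ : ℝ) (hγ : γ = β / (β - 1))
    (D E : Finset S) (hDE : Disjoint D E)
    (ks hs : S → ℕ) (hq : ℕ)
    (hhq : 1 + ∑ s ∈ D ∪ E, hs s ≤ hq)
    (kq : ℕ) (hkq : kq = ∑ s ∈ D ∪ E, ks s)
    (hksD : ∀ s ∈ D, (ks s : ℝ) ≤ β ^ (ℓ - 2) * (hs s : ℝ))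
    (hkqlb : (kq : ℤ) ≥ ⌊β ^ (ℓ - 1) * (hq : ℝ)⌋) :
    (∑ s ∈ D, (ks s : ℝ)) ≤ (kq : ℝ) / β ∧
    (∑ s ∈ E, (ks s : ℝ)) ≥ (kq : ℝ) / γ := by
  have hβ0 : 0 < β := by linarith
  have hsplit : (∑ s ∈ D, (ks s : ℝ)) + ∑ s ∈ E, (ks s : ℝ) = kq := by
    rw [hkq, Nat.cast_sum, sum_union hDE]
  have hmassD : ∑ s ∈ D, (ks s : ℝ) ≤ β ^ (ℓ - 2) * ∑ s ∈ D, (hs s : ℝ) := by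
    rw [mul_sum]; exact sum_le_sum hksD
  have hheightD : ∑ s ∈ D, (hs s : ℝ) + 1 ≤ hq := by
    have := sum_le_sum_of_subset (f := hs) (subset_union_left : D ⊆ D ∪ E)
    exact_mod_cast (by omega : ∑ s ∈ D, hs s + 1 ≤ hq)
  have hpow : β ^ (ℓ - 1) = β * β ^ (ℓ - 2) := by
    rw [← pow_succ', show ℓ - 2 + 1 = ℓ - 1 by omega]
  have hdeficient : β * ∑ s ∈ D, (ks s : ℝ) ≤ kq :=
    mul_le_of_le_mul_of_floor_le hβ0.le (by rw [← hpow]; exact one_le_pow₀ hβ1.le)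
      hmassD hheightD (by rw [← hpow]; exact hkqlb)
  exact ⟨by rwa [le_div_iff₀' hβ0],
    hγ ▸ div_div_sub_one_le_of_add_eq hβ1 hsplit hdeficient⟩

/-- "Excess in Phase 2": when the region below the descending server is
overfull relative to threshold `β_ℓ = β^{ℓ−1}` (i.e. `k_q ≥ ⌊β_ℓ·h_q⌋`),
at most a `1/β` fraction of its server mass lies in deficient edges and at
least a `1/γ` fraction lies in excessive edges, with `γ = β/(β−1)`. -/
theorem excess_phase2 {S : Type*} [DecidableEq S]
    (d ℓ : ℕ) (hd : 2 ≤ d) (hℓ1 : 2 ≤ ℓ) (hℓ2 : ℓ ≤ d)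
    (β : ℝ) (hβ1 : 1 < β) (hβ2 : β ≤ 2)
    (γ : ℝ) (hγ : γ = β / (β - 1))
    (D E : Finset S) (hDE : Disjoint D E)
    (ks hs : S → ℕ) (hq : ℕ)
    (hhq : 1 + ∑ s ∈ D ∪ E, hs s ≤ hq)
    (kq : ℕ) (hkq : kq = ∑ s ∈ D ∪ E, ks s)
    (hksD : ∀ s ∈ D, (ks s : ℝ) ≤ β ^ (ℓ - 2) * (hs s : ℝ))
    (hkqlb : (kq : ℤ) ≥ ⌊β ^ (ℓ - 1) * (hq : ℝ)⌋) :
    (∑ s ∈ D, (ks s : ℝ)) ≤ (kq : ℝ) / β ∧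
    (∑ s ∈ E, (ks s : ℝ)) ≥ (kq : ℝ) / γ :=
  excess_phase2_general ℓ hℓ1 β hβ1 γ hγ D E hDE ks hs hq hhq kq hkq hksD hkqlb
end

section
/- The inequality 2 + (1/β)·α^D_1 − (1/γ)·α^E_1 + α^D_d ≤ 0 holds. (This is the final inequality in Case 1 of the Phase-1 potential analysis: since (1/γ)α^E_1 ≥ 2 + (1/β)α^D_1 + γ^{d−2}·α^E_d and γ^{d−2}·α^E_d ≥ α^D_d, the online movement cost plus the change in potential during an elementary step of Phase 1 with k_u ≥ ⌊β h_u⌋ is nonpositive.) -/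
/-!
Since `β ≤ 2` we have `γ ≥ 2`, and since `δ > β^(d-1)` we have `α^E_d ≥ 3`; hence
`γ^(d-2) α^E_d ≥ 3·2^(d-2) ≥ 2d - 1 = α^D_d`. Keeping only the first (`i = 1`) summand of
`α^E_1`, all summands being nonnegative, gives `α^E_1 / γ ≥ 2 + α^D_1 / β + γ^(d-2) α^E_d`.
-/

open Finset

lemma two_mul_add_three_le_three_mul_two_pow (n : ℕ) : (2 * n + 3 : ℝ) ≤ 3 * 2 ^ n := by
  induction n with
  | zero => norm_num
  | succ k ih =>
    have : (1 : ℝ) ≤ 2 ^ k := one_le_pow₀ one_le_two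
    push_cast
    rw [pow_succ]
    linarith

lemma two_le_div_sub_one {β : ℝ} (h1 : 1 < β) (h2 : β ≤ 2) : 2 ≤ β / (β - 1) := by
  rw [le_div_iff₀ (by linarith)]
  linarith

lemma three_le_div_sub_mul_three_add {b δ a : ℝ} (hb : 0 < b) (hbδ : b < δ) (ha : 0 ≤ a) :
    3 ≤ δ / (δ - b) * (3 + b / δ * a) := by
  have h1 : 1 ≤ δ / (δ - b) := by
    rw [le_div_iff₀ (by linarith)]
    linarith
  have h3 : 3 ≤ 3 + b / δ * a :=
    le_add_of_nonneg_right (mul_nonneg (div_nonneg hb.le (by linarith)) ha)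
  nlinarith

lemma two_mul_sub_one_le_pow_sub_two_mul {γ x : ℝ} {n : ℕ} (hn : 2 ≤ n) (hγ : 2 ≤ γ)
    (hx : 3 ≤ x) : 2 * n - 1 ≤ γ ^ (n - 2) * x :=
  calc (2 * n - 1 : ℝ) = 2 * ((n - 2 : ℕ) : ℝ) + 3 := by push_cast [Nat.cast_sub hn]; ring
    _ ≤ 3 * 2 ^ (n - 2) := two_mul_add_three_le_three_mul_two_pow _
    _ ≤ x * γ ^ (n - 2) := by gcongr
    _ = γ ^ (n - 2) * x := mul_comm _ _

/-- The final inequality in Case 1 of the Phase-1 potential analysis: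
`2 + (1/β)·α^D_1 − (1/γ)·α^E_1 + α^D_d ≤ 0`. -/
theorem phase1_case1_ineq (d : ℕ) (hd : 2 ≤ d) (β δ γ : ℝ)
    (hβ1 : 1 < β) (hβ2 : β ≤ 2) (hδ : δ ≥ β ^ d)
    (hγ : γ = β / (β - 1))
    (αD αE : ℕ → ℝ)
    (hαD : ∀ l, 1 ≤ l → l ≤ d → αD l = 2 * (l : ℝ) - 1)
    (hαEd : αE d = δ / (δ - β ^ (d - 1)) * (3 + β ^ (d - 1) / δ * αD d))
    (hαE : ∀ l, 1 ≤ l → l ≤ d - 1 →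
      αE l = (∑ i ∈ Finset.Icc l (d - 1), γ ^ (i - l + 1) * (2 + 1 / β * αD i))
        + γ ^ (d - l) * αE d) :
    2 + (1 / β) * αD 1 - (1 / γ) * αE 1 + αD d ≤ 0 := by
  have hβ0 : 0 < β := by linarith
  have hγ2 : 2 ≤ γ := hγ ▸ two_le_div_sub_one hβ1 hβ2
  have hαDd : αD d = 2 * d - 1 := hαD d (by omega) le_rfl
  have hαEd3 : 3 ≤ αE d := by
    have hd2 : (2 : ℝ) ≤ d := by exact_mod_cast hd
    rw [hαEd]
    exact three_le_div_sub_mul_three_add (by positivity)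
      (lt_of_lt_of_le (pow_lt_pow_right₀ hβ1 (by omega)) hδ) (by linarith)
  have hterm_nonneg : ∀ i ∈ Icc 1 (d - 1), 0 ≤ γ ^ (i - 1 + 1) * (2 + 1 / β * αD i) := by
    intro i hi
    have hi1 : (1 : ℝ) ≤ i := by exact_mod_cast (mem_Icc.1 hi).1
    rw [hαD i (mem_Icc.1 hi).1 (by grind)]
    have : 0 ≤ 2 * (i : ℝ) - 1 := by linarith
    positivity
  have hsum := single_le_sum hterm_nonneg (mem_Icc.2 ⟨le_rfl, by omega⟩)
  have hpow : γ ^ (d - 1) = γ * γ ^ (d - 2) := by rw [← pow_succ']; congr 1; omega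
  have hαE1 : γ * (2 + 1 / β * αD 1 + γ ^ (d - 2) * αE d) ≤ αE 1 := by
    rw [hαE 1 le_rfl (by omega), hpow, mul_add, ← mul_assoc]
    simpa using hsum
  have hαE1_div : 2 + 1 / β * αD 1 + γ ^ (d - 2) * αE d ≤ 1 / γ * αE 1 := by
    rw [one_div_mul_eq_div γ, le_div_iff₀' (by linarith)]
    exact hαE1
  linarith [two_mul_sub_one_le_pow_sub_two_mul hd hγ2 hαEd3]
end

section
/- For every integer ℓ with 1 ≤ ℓ ≤ d, both ⌈β^{ℓ−1}⌉ · α^D_ℓ ≤ 2·(2d−1)·γ^d and ⌈β^{ℓ−1}⌉ · α^E_ℓ ≤ 2·(4d+1)·γ^{d+1}. (This makes explicit the lemma that ⌈β_ℓ⌉α^D_ℓ and ⌈β_ℓ⌉α^E_ℓ are of order O(d·γ^{d+1}), which yields the competitive ratio O(d·γ^{d+1}) of the algorithm on depth-d trees.) -/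
/-!
Since `β ≤ 2`, `γ = β/(β-1)` satisfies `γ ≥ 2` and `γ ≥ β`, so `⌈β^{ℓ-1}⌉ ≤ 2γ^{ℓ-1}`.
The condition `δ ≥ β·β_d` gives `δ/(δ-β_d) ≤ γ`, hence `α^E_d ≤ (2d+2)γ`. Every summand weight
`2 + α^D_i/β` of `α^E_ℓ` is at most `2d-1`, and because `γ ≥ 2` the geometric sum
`γ + ⋯ + γ^{d-ℓ}` is at most `γ^{d-ℓ+1}`; so `α^E_ℓ ≤ (4d+1)γ^{d-ℓ+1}`, and multiplying by
`⌈β^{ℓ-1}⌉ ≤ 2γ^{ℓ-1}` gives the bound.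
-/

open Finset

lemma geom_sum_le_pow_of_two_le {x : ℝ} (hx : 2 ≤ x) (n : ℕ) : ∑ k ∈ range n, x ^ k ≤ x ^ n := by
  have hxn : 1 ≤ x ^ n := one_le_pow₀ (by linarith)
  rw [geom_sum_eq (by linarith)]
  exact (div_le_self (by linarith) (by linarith)).trans (by linarith)

lemma sum_Icc_pow_sub_add_one_le {x : ℝ} (hx : 2 ≤ x) (l m : ℕ) :
    ∑ i ∈ Icc l m, x ^ (i - l + 1) ≤ x ^ (m + 1 - l + 1) := by
  rw [← Ico_add_one_right_eq_Icc, sum_Ico_eq_sum_range]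
  simp_rw [Nat.add_sub_cancel_left, pow_succ, ← sum_mul]
  gcongr
  exact geom_sum_le_pow_of_two_le hx _

lemma le_div_sub_one {β : ℝ} (h1 : 1 < β) (h2 : β ≤ 2) : β ≤ β / (β - 1) := by
  rw [le_div_iff₀ (by linarith)]
  nlinarith

lemma div_sub_le_div_sub_one {β c δ : ℝ} (hβ : 1 < β) (hc : 0 < c) (hδ : β * c ≤ δ) :
    δ / (δ - c) ≤ β / (β - 1) := by
  rw [div_le_div_iff₀ (by nlinarith) (by linarith)]
  linarith

lemma div_sub_mul_three_add_le {β c δ a : ℝ} (hβ : 1 < β) (hc : 0 < c) (hδ : β * c ≤ δ)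
    (ha : 0 ≤ a) : δ / (δ - c) * (3 + c / δ * a) ≤ β / (β - 1) * (3 + a) := by
  have hδ0 : 0 < δ := by nlinarith
  have hcδ : c / δ ≤ 1 := (div_le_one hδ0).2 (by nlinarith)
  exact mul_le_mul (div_sub_le_div_sub_one hβ hc hδ)
    (by linarith [mul_le_of_le_one_left ha hcδ]) (by positivity)
    (div_nonneg (by linarith) (by linarith))

lemma ceil_pow_le_two_mul_pow {β γ : ℝ} (hβ : 1 ≤ β) (hβγ : β ≤ γ) (n : ℕ) :
    (⌈β ^ n⌉ : ℝ) ≤ 2 * γ ^ n :=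
  (Int.ceil_le_two_mul (by linarith [one_le_pow₀ (n := n) hβ])).trans (by gcongr)

lemma alphaE_top_le {d : ℕ} {β δ γ : ℝ} {αD αE : ℕ → ℝ} (hβ : 1 < β) (hd : 1 ≤ d)
    (hδ : β ^ d ≤ δ) (hγ : γ = β / (β - 1)) (hαD : αD d = 2 * (d : ℝ) - 1)
    (hαEd : αE d = δ / (δ - β ^ (d - 1)) * (3 + β ^ (d - 1) / δ * αD d)) :
    αE d ≤ (2 * d + 2) * γ := by
  have hβd : β * β ^ (d - 1) ≤ δ := by rwa [← pow_succ', Nat.sub_add_cancel hd]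
  have hdR : (1 : ℝ) ≤ d := by exact_mod_cast hd
  rw [hαEd, hαD, hγ]
  convert div_sub_mul_three_add_le hβ (by positivity) hβd (by linarith : (0 : ℝ) ≤ 2 * d - 1)
    using 1
  ring

lemma alphaE_le {d l : ℕ} {β γ : ℝ} {αD αE : ℕ → ℝ} (hβ : 1 ≤ β) (hγ : 2 ≤ γ)
    (hαD : ∀ l, 1 ≤ l → l ≤ d → αD l = 2 * (l : ℝ) - 1)
    (hαEd : αE d ≤ (2 * d + 2) * γ)
    (hαE : ∀ l, 1 ≤ l → l ≤ d - 1 →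
      αE l = (∑ i ∈ Icc l (d - 1), γ ^ (i - l + 1) * (2 + 1 / β * αD i)) + γ ^ (d - l) * αE d)
    (hl1 : 1 ≤ l) (hld : l ≤ d) :
    αE l ≤ (4 * d + 1) * γ ^ (d - l + 1) := by
  have hlR : (1 : ℝ) ≤ l := by exact_mod_cast hl1
  rcases hld.eq_or_lt with rfl | hlt
  · rw [Nat.sub_self, zero_add, pow_one]
    exact hαEd.trans (mul_le_mul_of_nonneg_right (by linarith) (by linarith))
  have hweight : ∀ i ∈ Icc l (d - 1), 2 + 1 / β * αD i ≤ 2 * (d : ℝ) - 1 := by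
    intro i hi
    obtain ⟨hli, hid⟩ := mem_Icc.1 hi
    have hiR : (i : ℝ) + 1 ≤ d := by exact_mod_cast (by omega : i + 1 ≤ d)
    have hiR1 : (1 : ℝ) ≤ i := by exact_mod_cast hl1.trans hli
    rw [hαD i (by omega) (by omega), one_div_mul_eq_div]
    linarith [div_le_self (by linarith : (0 : ℝ) ≤ 2 * i - 1) hβ]
  have hdR : (1 : ℝ) ≤ d := by exact_mod_cast hl1.trans hld
  have hgeom := sum_Icc_pow_sub_add_one_le hγ l (d - 1)
  rw [show d - 1 + 1 - l + 1 = d - l + 1 by omega] at hgeom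
  calc αE l = (∑ i ∈ Icc l (d - 1), γ ^ (i - l + 1) * (2 + 1 / β * αD i)) + γ ^ (d - l) * αE d :=
        hαE l hl1 (by omega)
    _ ≤ (∑ i ∈ Icc l (d - 1), γ ^ (i - l + 1)) * (2 * d - 1) + γ ^ (d - l) * ((2 * d + 2) * γ) := by
        rw [sum_mul]
        gcongr with i hi
        exact hweight i hi
    _ ≤ γ ^ (d - l + 1) * (2 * d - 1) + γ ^ (d - l) * ((2 * d + 2) * γ) := by
        gcongr
        linarith
    _ = (4 * d + 1) * γ ^ (d - l + 1) := by ring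

theorem alpha_coeff_bounds_general (d : ℕ) (β δ γ : ℝ)
    (hβ1 : 1 < β) (hβ2 : β ≤ 2) (hδ : δ ≥ β ^ d)
    (hγ : γ = β / (β - 1))
    (αD αE : ℕ → ℝ)
    (hαD : ∀ l, 1 ≤ l → l ≤ d → αD l = 2 * (l : ℝ) - 1)
    (hαEd : αE d = δ / (δ - β ^ (d - 1)) * (3 + β ^ (d - 1) / δ * αD d))
    (hαE : ∀ l, 1 ≤ l → l ≤ d - 1 →
      αE l = (∑ i ∈ Finset.Icc l (d - 1), γ ^ (i - l + 1) * (2 + 1 / β * αD i))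
        + γ ^ (d - l) * αE d) :
    ∀ l, 1 ≤ l → l ≤ d →
      (⌈β ^ (l - 1)⌉ : ℝ) * αD l ≤ 2 * (2 * (d : ℝ) - 1) * γ ^ d ∧
      (⌈β ^ (l - 1)⌉ : ℝ) * αE l ≤ 2 * (4 * (d : ℝ) + 1) * γ ^ (d + 1) := by
  intro l hl1 hld
  have hlR1 : (1 : ℝ) ≤ l := by exact_mod_cast hl1
  have hlR : (l : ℝ) ≤ d := by exact_mod_cast hld
  have hγ2 : 2 ≤ γ := hγ ▸ two_le_div_sub_one hβ1 hβ2
  have hceil := ceil_pow_le_two_mul_pow hβ1.le (hγ ▸ le_div_sub_one hβ1 hβ2) (l - 1)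
  have hceil0 : (0 : ℝ) ≤ ⌈β ^ (l - 1)⌉ := by exact_mod_cast Int.ceil_nonneg (by positivity)
  have hEd := alphaE_top_le hβ1 (hl1.trans hld) hδ hγ (hαD d (hl1.trans hld) le_rfl) hαEd
  have hEl := alphaE_le hβ1.le hγ2 hαD hEd hαE hl1 hld
  constructor
  · calc (⌈β ^ (l - 1)⌉ : ℝ) * αD l ≤ 2 * γ ^ (l - 1) * (2 * d - 1) := by
          rw [hαD l hl1 hld]
          gcongr
          linarith
      _ ≤ 2 * (2 * d - 1) * γ ^ d := by
          rw [mul_right_comm]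
          gcongr
          · linarith
          · linarith
          · omega
  · calc (⌈β ^ (l - 1)⌉ : ℝ) * αE l ≤ 2 * γ ^ (l - 1) * ((4 * d + 1) * γ ^ (d - l + 1)) :=
          (mul_le_mul_of_nonneg_left hEl hceil0).trans
            (mul_le_mul_of_nonneg_right hceil (by positivity))
      _ = 2 * (4 * d + 1) * γ ^ d := by
          rw [mul_mul_mul_comm, ← pow_add, show l - 1 + (d - l + 1) = d by omega]
      _ ≤ 2 * (4 * d + 1) * γ ^ (d + 1) := by
          gcongr
          · linarith
          · omega

/-- Explicit form of the lemma that `⌈β_ℓ⌉·α^D_ℓ` and `⌈β_ℓ⌉·α^E_ℓ` are of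
order `O(d·γ^{d+1})`: for `1 ≤ ℓ ≤ d`, `⌈β^{ℓ−1}⌉·α^D_ℓ ≤ 2(2d−1)γ^d` and
`⌈β^{ℓ−1}⌉·α^E_ℓ ≤ 2(4d+1)γ^{d+1}`. -/
theorem alpha_coeff_bounds (d : ℕ) (hd : 2 ≤ d) (β δ γ : ℝ)
    (hβ1 : 1 < β) (hβ2 : β ≤ 2) (hδ : δ ≥ β ^ d)
    (hγ : γ = β / (β - 1))
    (αD αE : ℕ → ℝ)
    (hαD : ∀ l, 1 ≤ l → l ≤ d → αD l = 2 * (l : ℝ) - 1)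
    (hαEd : αE d = δ / (δ - β ^ (d - 1)) * (3 + β ^ (d - 1) / δ * αD d))
    (hαE : ∀ l, 1 ≤ l → l ≤ d - 1 →
      αE l = (∑ i ∈ Finset.Icc l (d - 1), γ ^ (i - l + 1) * (2 + 1 / β * αD i))
        + γ ^ (d - l) * αE d) :
    ∀ l, 1 ≤ l → l ≤ d →
      (⌈β ^ (l - 1)⌉ : ℝ) * αD l ≤ 2 * (2 * (d : ℝ) - 1) * γ ^ d ∧
      (⌈β ^ (l - 1)⌉ : ℝ) * αE l ≤ 2 * (4 * (d : ℝ) + 1) * γ ^ (d + 1) :=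
  alpha_coeff_bounds_general d β δ γ hβ1 hβ2 hδ hγ αD αE hαD hαEd hαE
end

section
/- For every integer ℓ with 2 ≤ ℓ ≤ d, α^E_ℓ < α^E_{ℓ−1}; that is, the excess coefficients strictly decrease with the level. -/
/-!
Unfolding one term of the sum gives the recurrence `α^E_ℓ = γ (2 + α^D_ℓ / β + α^E_{ℓ+1})`,
also at `ℓ = d - 1`. All coefficients are positive (`α^E_d > 0` because `δ > β_d`) and
`γ > 1`, so each step of the recurrence strictly increases the coefficient.
-/

open Finset

def excessCoeff (γ : ℝ) (a : ℕ → ℝ) (E : ℝ) (d l : ℕ) : ℝ :=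
  ∑ i ∈ Icc l (d - 1), γ ^ (i - l + 1) * a i + γ ^ (d - l) * E

namespace excessCoeff

variable {γ E : ℝ} {a : ℕ → ℝ} {d l : ℕ}

theorem self (hd : 0 < d) : excessCoeff γ a E d d = E := by
  simp [excessCoeff, Icc_eq_empty (show ¬d ≤ d - 1 by omega)]

theorem eq_mul_add_succ (hl : l < d) :
    excessCoeff γ a E d l = γ * (a l + excessCoeff γ a E d (l + 1)) := by
  have hsum : ∑ i ∈ Icc (l + 1) (d - 1), γ ^ (i - l + 1) * a i
      = γ * ∑ i ∈ Icc (l + 1) (d - 1), γ ^ (i - (l + 1) + 1) * a i := by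
    rw [mul_sum]
    refine sum_congr rfl fun i hi => ?_
    rw [show i - l + 1 = (i - (l + 1) + 1) + 1 by grind, pow_succ']
    ring
  rw [excessCoeff, excessCoeff, ← insert_Icc_add_one_left_eq_Icc (by omega : l ≤ d - 1),
    sum_insert (by simp), hsum, show d - l = d - (l + 1) + 1 by omega, Nat.sub_self]
  ring

theorem pos (hγ : 0 < γ) (ha : ∀ i ∈ Icc l (d - 1), 0 ≤ a i) (hE : 0 < E) :
    0 < excessCoeff γ a E d l :=
  add_pos_of_nonneg_of_pos
    (sum_nonneg fun i hi => mul_nonneg (pow_nonneg hγ.le _) (ha i hi))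
    (mul_pos (pow_pos hγ _) hE)

end excessCoeff

theorem one_lt_div_sub_one {β : ℝ} (hβ : 1 < β) : 1 < β / (β - 1) :=
  (one_lt_div (sub_pos.2 hβ)).2 (by linarith)

theorem lt_mul_add_of_one_lt {γ t x : ℝ} (hγ : 1 < γ) (ht : 0 < t) (hx : 0 < x) :
    x < γ * (t + x) := by
  nlinarith

theorem alphaE_strict_anti_general (d : ℕ) (β δ γ : ℝ)
    (hβ1 : 1 < β) (hδ : δ ≥ β ^ d)
    (hγ : γ = β / (β - 1))
    (αD αE : ℕ → ℝ)
    (hαD : ∀ l, 1 ≤ l → l ≤ d → αD l = 2 * (l : ℝ) - 1)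
    (hαEd : αE d = δ / (δ - β ^ (d - 1)) * (3 + β ^ (d - 1) / δ * αD d))
    (hαE : ∀ l, 1 ≤ l → l ≤ d - 1 →
      αE l = (∑ i ∈ Finset.Icc l (d - 1), γ ^ (i - l + 1) * (2 + 1 / β * αD i))
        + γ ^ (d - l) * αE d) :
    ∀ l, 2 ≤ l → l ≤ d → αE l < αE (l - 1) := by
  intro l hl hld
  obtain ⟨m, rfl⟩ : ∃ m, l = m + 1 := ⟨l - 1, by omega⟩
  set a : ℕ → ℝ := fun i => 2 + 1 / β * αD i
  have hβ0 : 0 < β := by linarith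
  have hαD_pos : ∀ i, 1 ≤ i → i ≤ d → 0 < αD i := fun i h1 h2 => by
    rw [hαD i h1 h2]; linarith [(Nat.one_le_cast (α := ℝ)).2 h1]
  have ha : ∀ i, 1 ≤ i → i ≤ d → 0 < a i := fun i h1 h2 =>
    add_pos two_pos (mul_pos (one_div_pos.2 hβ0) (hαD_pos i h1 h2))
  have hδ' : β ^ (d - 1) < δ :=
    (pow_lt_pow_right₀ hβ1 (by omega : d - 1 < d)).trans_le hδ
  have hδ0 : 0 < δ := (pow_pos hβ0 _).trans hδ'
  have hEd : 0 < αE d := by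
    rw [hαEd]
    exact mul_pos (div_pos hδ0 (sub_pos.2 hδ')) (add_pos three_pos
      (mul_pos (div_pos (pow_pos hβ0 _) hδ0) (hαD_pos d (by omega) le_rfl)))
  have hrep : ∀ k, 1 ≤ k → k ≤ d → αE k = excessCoeff γ a (αE d) d k := fun k h1 h2 => by
    rcases h2.lt_or_eq with h2 | rfl
    · exact hαE k h1 (by omega)
    · exact (excessCoeff.self (by omega)).symm
  have hγ1 : 1 < γ := hγ ▸ one_lt_div_sub_one hβ1
  rw [Nat.add_sub_cancel, hrep m (by omega) (by omega), hrep (m + 1) (by omega) hld,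
    excessCoeff.eq_mul_add_succ (show m < d by omega)]
  exact lt_mul_add_of_one_lt hγ1 (ha m (by omega) (by omega))
    (excessCoeff.pos (by linarith) (fun i hi => (ha i (by grind) (by grind)).le) hEd)

/-- The excess coefficients strictly decrease with the level:
`α^E_ℓ < α^E_{ℓ−1}` for `2 ≤ ℓ ≤ d`. -/
theorem alphaE_strict_anti (d : ℕ) (hd : 2 ≤ d) (β δ γ : ℝ)
    (hβ1 : 1 < β) (hβ2 : β ≤ 2) (hδ : δ ≥ β ^ d)
    (hγ : γ = β / (β - 1))
    (αD αE : ℕ → ℝ)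
    (hαD : ∀ l, 1 ≤ l → l ≤ d → αD l = 2 * (l : ℝ) - 1)
    (hαEd : αE d = δ / (δ - β ^ (d - 1)) * (3 + β ^ (d - 1) / δ * αD d))
    (hαE : ∀ l, 1 ≤ l → l ≤ d - 1 →
      αE l = (∑ i ∈ Finset.Icc l (d - 1), γ ^ (i - l + 1) * (2 + 1 / β * αD i))
        + γ ^ (d - l) * αE d) :
    ∀ l, 2 ≤ l → l ≤ d → αE l < αE (l - 1) :=
  alphaE_strict_anti_general d β δ γ hβ1 hδ hγ αD αE hαD hαEd hαE
end

section
/- Let h ≥ 1 be an integer and ε a real with 0 < ε ≤ 1/4. Then: (1) for every integer i ≥ 1, ⌊(1−ε)/ε⌋ · (2(i−1)+1) · ε ≥ (1−2ε)·(2i−1); and (2) 1 + ∑_{i=2}^{h} (1−2ε)·(2i−1) ≥ (1−2ε)·h² ≥ h²/2. Consequently, in each phase of the adversarial strategy against the Double Coverage algorithm on the depth-2 HST, the online cost is at least h²/2 while the adversary's cost is 2h, so the ratio per phase is at least h/4. -/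
/-!
Since `⌊x⌋ > x - 1`, one has `⌊(1 - ε)/ε⌋ · ε ≥ 1 - 2ε`, which gives the per-step bound after
multiplying by `2i - 1`. Summing the odd numbers `2i - 1` for `2 ≤ i ≤ h` gives `h² - 1`, so the
phase total is `1 + (1 - 2ε)(h² - 1) = (1 - 2ε) h² + 2ε`, and `1 - 2ε ≥ 1/2` for `ε ≤ 1/4`.
-/

open Finset

theorem Int.sub_le_floor_div_mul {K : Type*} [Field K] [LinearOrder K] [IsStrictOrderedRing K]
    [FloorRing K] (a : K) {ε : K} (hε : 0 < ε) : a - ε ≤ ⌊a / ε⌋ * ε := by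
  have hfloor : a / ε - 1 ≤ ⌊a / ε⌋ := (Int.sub_one_lt_floor _).le
  calc a - ε = (a / ε - 1) * ε := by field_simp
    _ ≤ ⌊a / ε⌋ * ε := mul_le_mul_of_nonneg_right hfloor hε.le

theorem Finset.sum_Icc_two_odd {R : Type*} [CommRing R] {h : ℕ} (hh : 1 ≤ h) :
    ∑ i ∈ Icc 2 h, (2 * (i : R) - 1) = (h : R) ^ 2 - 1 := by
  induction h, hh using Nat.le_induction with
  | base => simp
  | succ n hn ih =>
    rw [sum_Icc_succ_top (by omega), ih]
    push_cast
    ring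

/-- Cost accounting for the lower bound against Double Coverage on a
depth-2 HST: per-step estimate and the total per-phase cost of at least `h²/2`. -/
theorem dc_phase_cost (h : ℕ) (hh : 1 ≤ h) (ε : ℝ) (hε0 : 0 < ε) (hε : ε ≤ 1/4) :
    (∀ i : ℕ, 1 ≤ i →
      (⌊(1 - ε) / ε⌋ : ℝ) * (2 * ((i : ℝ) - 1) + 1) * ε ≥
        (1 - 2 * ε) * (2 * (i : ℝ) - 1)) ∧
    (1 + ∑ i ∈ Finset.Icc 2 h, (1 - 2 * ε) * (2 * (i : ℝ) - 1) ≥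
      (1 - 2 * ε) * (h : ℝ) ^ 2) ∧
    (1 - 2 * ε) * (h : ℝ) ^ 2 ≥ (h : ℝ) ^ 2 / 2 := by
  refine ⟨fun i hi ↦ ?_, ?_, ?_⟩
  · have hstep : 1 - 2 * ε ≤ ⌊(1 - ε) / ε⌋ * ε := by
      linarith [Int.sub_le_floor_div_mul (1 - ε) hε0]
    have hodd : (0 : ℝ) ≤ 2 * i - 1 := by
      have : (1 : ℝ) ≤ i := by exact_mod_cast hi
      linarith
    calc (1 - 2 * ε) * (2 * (i : ℝ) - 1) ≤ ⌊(1 - ε) / ε⌋ * ε * (2 * (i : ℝ) - 1) :=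
          mul_le_mul_of_nonneg_right hstep hodd
      _ = _ := by ring
  · rw [← mul_sum, sum_Icc_two_odd hh]
    nlinarith
  · nlinarith [sq_nonneg (h : ℝ)]
end
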